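/- Let F be a 2-connected graph on r vertices with s edges, and let H_F be an F-graph whose underlying multi-hypergraph Ĥ_F contains no avoidable configuration (connected subhypergraph with nullity ≥ 2 and at most 2·C(r,2) hyperedges). Suppose F_0 is a copy of F contained in G(H_F) but not present as an F-edge of H_F. Then Ĥ_F contains a clean k-cycle H for some 2 ≤ k ≤ s such that every edge of F_0 lies inside some hyperedge of H. -/

import Mathlib

/-- `E` is (the edge set of) a copy of the graph `F` on the vertex type `V`: the image of
the edges of `F` under an injection of the vertices. -/
def IsCopy {α V : Type*} (F : SimpleGraph α) (E : Finset (Sym2 V)) : Prop :=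
  ∃ φ : α ↪ V, (↑E : Set (Sym2 V)) = Sym2.map φ '' F.edgeSet

/-- The set of vertices spanned by a finite set of graph edges. -/
def vertsOf {V : Type*} [DecidableEq V] (E : Finset (Sym2 V)) : Finset V :=
  E.sup fun e => Sym2.lift ⟨fun a b => ({a, b} : Finset V), fun a b => Finset.pair_comm a b⟩ e

/-- `F` is 2-connected: at least 3 vertices and removing any single vertex leaves a
connected graph. -/
def TwoConnected {α : Type*} [Fintype α] (F : SimpleGraph α) : Prop :=
  3 ≤ Fintype.card α ∧ ∀ v : α, (F.induce ({v}ᶜ : Set α)).Connected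

/-- A clean `k`-cycle (`k ≥ 2`) of `r`-uniform hyperedges: formed from a graph `k`-cycle
`c 0, c 1, …` by adding `r - 2` new vertices to each edge, all distinct (for `k = 2` this
means two hyperedges sharing exactly two vertices). -/
def IsCleanCycle {V : Type*} [DecidableEq V] (r k : ℕ) (C : Finset (Finset V)) : Prop :=
  ∃ (c : Fin k → V) (ext : Fin k → Finset V),
    Function.Injective c ∧ (∀ i, (ext i).card = r - 2) ∧
    (∀ i j, i ≠ j → Disjoint (ext i) (ext j)) ∧
    (∀ i j, c i ∉ ext j) ∧
    C = Finset.image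
      (fun i : Fin k =>
        insert (c i) (insert (c ⟨((i : ℕ) + 1) % k, Nat.mod_lt _ i.pos⟩) (ext i)))
      Finset.univ

/-- Connectivity of a configuration of hyperedges (each hyperedge being the vertex set of
a copy, i.e. `vertsOf E`): any two spanned vertices are joined by a chain of copies. -/
def ConfigConnected {V : Type*} [DecidableEq V] (𝒮 : Finset (Finset (Sym2 V))) : Prop :=
  ∀ u ∈ 𝒮.sup vertsOf, ∀ v ∈ 𝒮.sup vertsOf,
    Relation.ReflTransGen (fun x y => ∃ E ∈ 𝒮, x ∈ vertsOf E ∧ y ∈ vertsOf E) u v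

/-- The multi-hypergraph underlying the `F`-graph `𝓕` (one hyperedge, the vertex set, per
copy) contains no avoidable configuration: no nonempty connected subfamily `𝒮` with at
most `2·C(r,2)` hyperedges and nullity `(r-1)e + 1 - |V| ≥ 2`. -/
def NoAvoidableConfig {V : Type*} [DecidableEq V] (r : ℕ)
    (𝓕 : Finset (Finset (Sym2 V))) : Prop :=
  ¬ ∃ 𝒮 ⊆ 𝓕, 𝒮.Nonempty ∧ ConfigConnected 𝒮 ∧ 𝒮.card ≤ 2 * r.choose 2 ∧
      2 ≤ ((r : ℤ) - 1) * 𝒮.card + 1 - (𝒮.sup vertsOf).card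

/-!
Cover the edges of `E₀` by at most `s` copies from `𝓕` and trace each copy on the vertex set
of `E₀`. Two-connectivity of `F` forces every trace to contain at least two vertices that are
shared with other traces, so the `m` traces have total size at least `r + m`. Since the cover is
connected and small, the absence of avoidable configurations bounds its nullity by one, which
bounds the same total by `r + m`. In the equality case every trace has exactly two shared
vertices, every shared vertex lies in exactly two traces, and the copies are pairwise disjoint
outside `E₀`. The incidence graph between copies and shared vertices is then a single cycle, and
reading the copies along it gives a clean `m`-cycle.
-/

open Finset Function SimpleGraph

-- Spelled exactly as in `IsCleanCycle`, so that the two agree definitionally.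
def Fin.cycSucc {m : ℕ} (t : Fin m) : Fin m := ⟨(t + 1) % m, Nat.mod_lt _ t.pos⟩

lemma Fin.cycSucc_ne {m : ℕ} (hm : 2 ≤ m) (t : Fin m) : t.cycSucc ≠ t := by
  rw [Ne, Fin.ext_iff]
  rcases Nat.lt_or_ge (t + 1) m with h | h
  · simp only [cycSucc, Nat.mod_eq_of_lt h]; omega
  · simp only [cycSucc, show (t : ℕ) + 1 = m by omega, Nat.mod_self]; omega

section IncidenceGraph

variable {ι β : Type*} (R : ι → β → Prop)

def incidenceGraph : SimpleGraph (ι ⊕ β) where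
  Adj
    | .inl i, .inr a => R i a
    | .inr a, .inl i => R i a
    | _, _ => False
  symm := ⟨by rintro (i | a) (j | b) h <;> exact h⟩
  loopless := ⟨by rintro (i | a) h <;> exact h⟩

variable {R}

@[simp] lemma incidenceGraph_adj_inl_inr {i : ι} {a : β} :
    (incidenceGraph R).Adj (.inl i) (.inr a) ↔ R i a := Iff.rfl

@[simp] lemma incidenceGraph_adj_inr_inl {i : ι} {a : β} :
    (incidenceGraph R).Adj (.inr a) (.inl i) ↔ R i a := Iff.rfl

lemma incidenceGraph_adj_isLeft_iff {x y : ι ⊕ β} (h : (incidenceGraph R).Adj x y) :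
    x.isLeft ↔ ¬ y.isLeft := by
  rcases x with i | a <;> rcases y with j | b <;> simp_all [incidenceGraph]

lemma incidenceGraph_getVert_isLeft_iff {u v : ι ⊕ β} (p : (incidenceGraph R).Walk u v) {n : ℕ}
    (hn : n ≤ p.length) : (p.getVert n).isLeft ↔ (u.isLeft ↔ Even n) := by
  induction n with
  | zero => simp
  | succ n ih =>
    rw [← not_iff_not, ← incidenceGraph_adj_isLeft_iff (p.adj_getVert_succ (by omega)),
      ih (by omega), Nat.even_add_one]
    tauto

lemma incidenceGraph_neighborSet_inl (i : ι) :
    (incidenceGraph R).neighborSet (.inl i) = .inr '' {a | R i a} := by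
  ext (j | a) <;> simp [incidenceGraph]

lemma incidenceGraph_neighborSet_inr (a : β) :
    (incidenceGraph R).neighborSet (.inr a) = .inl '' {i | R i a} := by
  ext (j | b) <;> simp [incidenceGraph]

end IncidenceGraph

section CyclicOrder

variable {ι β : Type*} [Fintype ι] [DecidableEq β] {D : ι → Finset β} {S : Finset β}

lemma isCycles_incidenceGraph (hpart : ∀ i, #(D i ∩ S) = 2)
    (hS : ∀ a ∈ S, #{i | a ∈ D i} = 2) :
    (incidenceGraph fun i a => a ∈ D i ∩ S).IsCycles := by
  rintro (i | a) ⟨x, hx⟩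
  · rw [incidenceGraph_neighborSet_inl, Set.ncard_image_of_injective _ Sum.inr_injective,
      ← hpart i, ← Set.ncard_coe_finset]
    rfl
  · rw [incidenceGraph_neighborSet_inr] at hx ⊢
    obtain ⟨i, hi, -⟩ := hx
    rw [Set.ncard_image_of_injective _ Sum.inl_injective, ← hS a (mem_inter.mp hi).2,
      ← Set.ncard_coe_finset]
    congr 1
    ext j
    simp [(mem_inter.mp hi).2]

lemma exists_cyclic_order_of_isCycle {a₀ : β}
    {p : (incidenceGraph fun i a => a ∈ D i ∩ S).Walk (.inr a₀) (.inr a₀)} (hp : p.IsCycle)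
    (hpart : ∀ i, #(D i ∩ S) = 2) (hall : ∀ i, .inl i ∈ p.support) :
    ∃ (q : Fin (Fintype.card ι) → ι) (c : Fin (Fintype.card ι) → β), Bijective q ∧
      Injective c ∧ ∀ t, D (q t) ∩ S = {c t, c t.cycSucc} := by
  -- The cycle alternates: shared vertices `c t` sit at the even positions `2 t`, parts `q t` at
  -- the odd positions `2 t + 1`, and position `2 m` closes the cycle back to `c 0`.
  have hpar : ∀ n ≤ p.length, (p.getVert n).isLeft ↔ ¬ Even n := fun n hn => by
    simpa using incidenceGraph_getVert_isLeft_iff p hn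
  obtain ⟨m, hL⟩ : Even p.length := by simpa [p.getVert_length] using hpar _ le_rfl
  have hinj : ∀ {j k}, j < p.length → k < p.length → p.getVert j = p.getVert k → j = k :=
    fun hj hk h => hp.getVert_injOn' (by simp; omega) (by simp; omega) h
  have hodd : ∀ k < m, (p.getVert (2 * k + 1)).isLeft := fun k hk =>
    (hpar _ (by omega)).mpr (by simp)
  have heven : ∀ k < m, (p.getVert (2 * k)).isRight := fun k hk => by
    rw [← Sum.not_isLeft, hpar _ (by omega)]; simp
  choose q hq using fun k : Fin m => Sum.isLeft_iff.mp (hodd k k.2)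
  choose c hc using fun k : Fin m => Sum.isRight_iff.mp (heven k k.2)
  have hq_inj : Injective q := fun k l h => Fin.ext <| by
    have := hinj (by omega) (by omega) ((hq k).trans ((congrArg _ h).trans (hq l).symm))
    omega
  have hq_surj : Surjective q := fun i => by
    obtain ⟨j, hj, hjL⟩ := Walk.mem_support_iff_exists_getVert.mp (hall i)
    have hj_odd : ¬ Even j := (hpar j hjL).mp (by simp [hj])
    obtain ⟨k, rfl⟩ := Nat.not_even_iff_odd.mp hj_odd
    exact ⟨⟨k, by omega⟩, Sum.inl_injective ((hq _).symm.trans hj)⟩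
  obtain rfl : m = Fintype.card ι := by
    simpa using Fintype.card_of_bijective ⟨hq_inj, hq_surj⟩
  refine ⟨q, c, ⟨hq_inj, hq_surj⟩, fun k l h => Fin.ext ?_, fun t => ?_⟩
  · have := hinj (by omega) (by omega) ((hc k).trans ((congrArg _ h).trans (hc l).symm))
    omega
  have hnext : p.getVert (2 * t + 1 + 1) = .inr (c t.cycSucc) := by
    rw [← hc]
    show _ = p.getVert (2 * ((t + 1) % Fintype.card ι))
    rcases Nat.lt_or_ge (t + 1) (Fintype.card ι) with h | h
    · rw [Nat.mod_eq_of_lt h]; ring_nf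
    · rw [show (t : ℕ) + 1 = Fintype.card ι by omega, Nat.mod_self, mul_zero, p.getVert_zero,
        p.getVert_of_length_le (by omega)]
  have hfst : c t ∈ D (q t) ∩ S := by
    simpa [hc, hq] using p.adj_getVert_succ (i := 2 * t) (by omega)
  have hsnd : c t.cycSucc ∈ D (q t) ∩ S := by
    simpa [hnext, hq] using p.adj_getVert_succ (i := 2 * t + 1) (by omega)
  have hne : c t ≠ c t.cycSucc := by
    simpa [hc, hnext] using hp.getVert_sub_one_ne_getVert_add_one (i := 2 * t + 1) (by omega)
  exact (eq_of_subset_of_card_le (insert_subset hfst (singleton_subset_iff.mpr hsnd))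
    (by rw [hpart, card_pair hne])).symm

theorem exists_cyclic_order [Nonempty ι] [Finite β] (hpart : ∀ i, #(D i ∩ S) = 2)
    (hS : ∀ a ∈ S, #{i | a ∈ D i} = 2)
    (hconn : ∀ i j, (incidenceGraph fun i a => a ∈ D i ∩ S).Reachable (.inl i) (.inl j)) :
    ∃ (q : Fin (Fintype.card ι) → ι) (c : Fin (Fintype.card ι) → β), Bijective q ∧
      Injective c ∧ ∀ t, D (q t) ∩ S = {c t, c t.cycSucc} := by
  obtain ⟨i₀⟩ := ‹Nonempty ι›
  obtain ⟨a₀, ha₀⟩ := card_pos.mp (hpart i₀ ▸ two_pos)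
  have hadj : (incidenceGraph fun i a => a ∈ D i ∩ S).Adj (.inr a₀) (.inl i₀) := ha₀
  obtain ⟨p, hp, hverts⟩ :=
    (isCycles_incidenceGraph hpart hS).exists_cycle_toSubgraph_verts_eq_connectedComponentSupp
      (v := .inr a₀) ConnectedComponent.connectedComponentMk_mem
      ⟨.inl i₀, (mem_neighborSet _ _ _).mpr hadj⟩
  refine exists_cyclic_order_of_isCycle hp hpart fun i => ?_
  rw [← Walk.mem_verts_toSubgraph, hverts, ConnectedComponent.mem_supp_iff, ConnectedComponent.eq]
  exact (hconn i i₀).trans hadj.symm.reachable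

end CyclicOrder

section SharedVertices

variable {ι α : Type*} [Fintype ι] [DecidableEq α] {D : ι → Finset α}

lemma sum_card_inter_eq_sum_card (s : Finset α) :
    ∑ i, #(D i ∩ s) = ∑ a ∈ s, #{i | a ∈ D i} := by
  convert sum_card_bipartiteAbove_eq_sum_card_bipartiteBelow (fun i a => a ∈ D i) using 3
  all_goals ext; simp [bipartiteAbove, bipartiteBelow, and_comm]

variable [Fintype α]

variable (D) in
def sharedVerts : Finset α := {a | 2 ≤ #{i | a ∈ D i}}

lemma mem_sharedVerts {a : α} : a ∈ sharedVerts D ↔ 2 ≤ #{i | a ∈ D i} := by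
  simp [sharedVerts]

lemma mem_sharedVerts_of_ne {a : α} {i j : ι} (hij : i ≠ j) (hi : a ∈ D i) (hj : a ∈ D j) :
    a ∈ sharedVerts D :=
  mem_sharedVerts.mpr (one_lt_card.mpr ⟨i, by simpa, j, by simpa, hij⟩)

lemma card_compl_add_sum_le (hcov : ∀ a, ∃ i, a ∈ D i) :
    #(sharedVerts D)ᶜ + ∑ a ∈ sharedVerts D, #{i | a ∈ D i} ≤ ∑ i, #(D i) := by
  have hsum := sum_card_inter_eq_sum_card (D := D) univ
  simp only [inter_univ] at hsum
  rw [hsum, ← sum_compl_add_sum (sharedVerts D), card_eq_sum_ones]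
  gcongr with a
  obtain ⟨i, hi⟩ := hcov a
  exact card_pos.mpr ⟨i, by simpa⟩

lemma card_add_card_le_sum_card (hcov : ∀ a, ∃ i, a ∈ D i)
    (hshared : ∀ i, 2 ≤ #(D i ∩ sharedVerts D)) :
    Fintype.card α + Fintype.card ι ≤ ∑ i, #(D i) := by
  have hparts : 2 * Fintype.card ι ≤ ∑ a ∈ sharedVerts D, #{i | a ∈ D i} := by
    rw [← sum_card_inter_eq_sum_card, mul_comm, ← smul_eq_mul, ← card_univ, ← sum_const]
    exact sum_le_sum fun i _ => hshared i
  have hverts : 2 * #(sharedVerts D) ≤ ∑ a ∈ sharedVerts D, #{i | a ∈ D i} := by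
    rw [mul_comm, ← smul_eq_mul, ← sum_const]
    exact sum_le_sum fun a ha => mem_sharedVerts.mp ha
  have := card_compl_add_sum_le hcov
  have := card_compl_add_card (sharedVerts D)
  omega

lemma card_inter_sharedVerts_eq_two (hcov : ∀ a, ∃ i, a ∈ D i)
    (hshared : ∀ i, 2 ≤ #(D i ∩ sharedVerts D))
    (hle : ∑ i, #(D i) ≤ Fintype.card α + Fintype.card ι) :
    (∀ i, #(D i ∩ sharedVerts D) = 2) ∧ ∀ a ∈ sharedVerts D, #{i | a ∈ D i} = 2 := by
  have hX := sum_card_inter_eq_sum_card (D := D) (sharedVerts D)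
  have hparts := sum_le_sum fun i (_ : i ∈ univ) => hshared i
  have hverts := sum_le_sum fun a (ha : a ∈ sharedVerts D) => mem_sharedVerts.mp ha
  have := card_compl_add_sum_le hcov
  have := card_compl_add_card (sharedVerts D)
  simp only [sum_const, card_univ, smul_eq_mul] at hparts hverts
  constructor
  · refine fun i => ((sum_eq_sum_iff_of_le fun i _ => hshared i).mp ?_ i (mem_univ i)).symm
    simp only [sum_const, card_univ, smul_eq_mul]
    omega
  · refine fun a ha => ((sum_eq_sum_iff_of_le fun a ha => mem_sharedVerts.mp ha).mp ?_ a ha).symm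
    simp only [sum_const, smul_eq_mul]
    omega

end SharedVertices

lemma reachable_incidenceGraph_sharedVerts {ι α : Type*} [Fintype ι] [Fintype α] [DecidableEq α]
    {F : SimpleGraph α} {D : ι → Finset α} (hF : F.Connected)
    (hcov : ∀ a b, F.Adj a b → ∃ i, a ∈ D i ∧ b ∈ D i) (hne : ∀ i, (D i).Nonempty) (i j : ι) :
    (incidenceGraph fun i a => a ∈ D i ∩ sharedVerts D).Reachable (.inl i) (.inl j) := by
  set G := incidenceGraph fun i a => a ∈ D i ∩ sharedVerts D
  have hbase : ∀ {a i j}, a ∈ D i → a ∈ D j → G.Reachable (.inl i) (.inl j) := by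
    intro a i j hi hj
    rcases eq_or_ne i j with rfl | hij
    · rfl
    have ha := mem_sharedVerts_of_ne hij hi hj
    have hi' : G.Adj (.inl i) (.inr a) := mem_inter.mpr ⟨hi, ha⟩
    have hj' : G.Adj (.inr a) (.inl j) := mem_inter.mpr ⟨hj, ha⟩
    exact hi'.reachable.trans hj'.reachable
  obtain ⟨x, hx⟩ := hne i
  obtain ⟨y, hy⟩ := hne j
  obtain ⟨p⟩ := hF.preconnected x y
  induction p generalizing i with
  | nil => exact hbase hx hy
  | cons hadj _ ih =>
    obtain ⟨l, h₁, h₂⟩ := hcov _ _ hadj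
    exact (hbase hx h₁).trans (ih l h₂ hy)

lemma SimpleGraph.ncard_edgeSet_le_choose_two {α : Type*} [Fintype α] (F : SimpleGraph α) :
    F.edgeSet.ncard ≤ (Fintype.card α).choose 2 := by
  classical
  rw [← coe_edgeFinset, Set.ncard_coe_finset]
  exact card_edgeFinset_le_card_choose_two

namespace TwoConnected

variable {α : Type*} [Fintype α] {F : SimpleGraph α}

lemma exists_ne_ne (hF : TwoConnected F) (a b : α) : ∃ w, w ≠ a ∧ w ≠ b := by
  classical
  obtain ⟨w, hw⟩ : ({a, b}ᶜ : Finset α).Nonempty := by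
    rw [← card_pos, card_compl]
    have := card_le_two (a := a) (b := b)
    have := hF.1
    omega
  exact ⟨w, by simpa [not_or] using hw⟩

lemma reachable (hF : TwoConnected F) (a b : α) : F.Reachable a b := by
  obtain ⟨w, hwa, hwb⟩ := hF.exists_ne_ne a b
  obtain ⟨p⟩ := (hF.2 w).preconnected ⟨a, hwa.symm⟩ ⟨b, hwb.symm⟩
  exact ⟨p.map (Embedding.induce _).toHom⟩

lemma connected (hF : TwoConnected F) : F.Connected :=
  have : Nonempty α := Fintype.card_pos_iff.mp (by have := hF.1; omega)
  ⟨hF.reachable⟩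

lemma exists_adj (hF : TwoConnected F) (a : α) : ∃ b, F.Adj a b := by
  obtain ⟨w, hwa, -⟩ := hF.exists_ne_ne a a
  obtain ⟨p⟩ := hF.reachable a w
  cases p with
  | nil => exact absurd rfl hwa
  | cons h _ => exact ⟨_, h⟩

lemma two_le_card_boundary [DecidableEq α] [DecidableRel F.Adj] (hF : TwoConnected F)
    {A : Finset α} (hA : 2 ≤ #A) (hAu : A ≠ univ) : 2 ≤ #{x ∈ A | ∃ y ∉ A, F.Adj x y} := by
  obtain ⟨z, hz⟩ : ∃ z, z ∉ A := by simpa [eq_univ_iff_forall] using hAu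
  have hexit : ∀ v, ∀ x ∈ A, x ≠ v → z ≠ v → ∃ w ∈ {x ∈ A | ∃ y ∉ A, F.Adj x y}, w ≠ v := by
    intro v x hx hxv hzv
    obtain ⟨p⟩ := (hF.2 v).preconnected ⟨x, hxv⟩ ⟨z, hzv⟩
    obtain ⟨d, -, hd₁, hd₂⟩ := p.exists_boundary_dart {u | ↑u ∈ A} (by exact hx) (by exact hz)
    exact ⟨d.fst, mem_filter.mpr ⟨hd₁, d.snd, hd₂, by simpa using d.adj⟩, d.fst.2⟩
  have hzA : ∀ v ∈ A, z ≠ v := fun v hv h => hz (h ▸ hv)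
  obtain ⟨x₁, hx₁, x₂, hx₂, hne⟩ := one_lt_card.mp hA
  obtain ⟨w₁, hw₁, hw₁x⟩ := hexit x₁ x₂ hx₂ hne.symm (hzA x₁ hx₁)
  obtain ⟨w₂, hw₂, hw₂w⟩ := hexit w₁ x₁ hx₁ hw₁x.symm (hzA w₁ (mem_filter.mp hw₁).1)
  exact one_lt_card.mpr ⟨w₁, hw₁, w₂, hw₂, hw₂w.symm⟩

variable {ι : Type*} [Fintype ι] [DecidableEq α] {D : ι → Finset α}

lemma two_le_card_inter_sharedVerts [Nontrivial ι] (hF : TwoConnected F)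
    (hcov : ∀ a b, F.Adj a b → ∃ i, a ∈ D i ∧ b ∈ D i)
    (hedge : ∀ i, ∃ a b, F.Adj a b ∧ a ∈ D i ∧ b ∈ D i) (j : ι) :
    2 ≤ #(D j ∩ sharedVerts D) := by
  classical
  by_cases hj : D j = univ
  · obtain ⟨l, hl⟩ := exists_ne j
    obtain ⟨a, b, hab, ha, hb⟩ := hedge l
    have hshared : ∀ x ∈ D l, x ∈ D j ∩ sharedVerts D := fun x hx =>
      mem_inter.mpr ⟨hj ▸ mem_univ x, mem_sharedVerts_of_ne hl hx (hj ▸ mem_univ x)⟩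
    exact one_lt_card.mpr ⟨a, hshared a ha, b, hshared b hb, hab.ne⟩
  · obtain ⟨a, b, hab, ha, hb⟩ := hedge j
    refine (hF.two_le_card_boundary (one_lt_card.mpr ⟨a, ha, b, hb, hab.ne⟩) hj).trans
      (card_le_card fun x hx => ?_)
    obtain ⟨hxj, y, hy, hxy⟩ := mem_filter.mp hx
    obtain ⟨l, hxl, hyl⟩ := hcov x y hxy
    exact mem_inter.mpr ⟨hxj, mem_sharedVerts_of_ne (fun h : l = j => hy (h ▸ hyl)) hxl hxj⟩

end TwoConnected

section Copies

variable {α V : Type*}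

lemma mem_vertsOf [DecidableEq V] {E : Finset (Sym2 V)} {x : V} :
    x ∈ vertsOf E ↔ ∃ e ∈ E, x ∈ e := by
  simp only [vertsOf, mem_sup]
  refine exists_congr fun e => and_congr_right fun _ => ?_
  induction e using Sym2.ind with
  | h a b => simp

variable {F : SimpleGraph α} {φ : α ↪ V} {E : Finset (Sym2 V)}

lemma mk_mem_of_adj (hφ : (↑E : Set (Sym2 V)) = Sym2.map φ '' F.edgeSet) {a b : α}
    (h : F.Adj a b) : s(φ a, φ b) ∈ E := by
  rw [← mem_coe, hφ]
  exact ⟨s(a, b), h, rfl⟩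

lemma exists_adj_of_mem (hφ : (↑E : Set (Sym2 V)) = Sym2.map φ '' F.edgeSet) {e : Sym2 V}
    (he : e ∈ E) : ∃ a b, F.Adj a b ∧ e = s(φ a, φ b) := by
  rw [← mem_coe, hφ] at he
  obtain ⟨f, hf, rfl⟩ := he
  induction f using Sym2.ind with
  | h a b => exact ⟨a, b, hf, rfl⟩

lemma vertsOf_eq_map [Fintype α] [DecidableEq V]
    (hφ : (↑E : Set (Sym2 V)) = Sym2.map φ '' F.edgeSet) (hdeg : ∀ a, ∃ b, F.Adj a b) :
    vertsOf E = univ.map φ := by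
  ext x
  simp only [mem_vertsOf, mem_map, mem_univ, true_and]
  constructor
  · rintro ⟨e, he, hx⟩
    obtain ⟨a, b, -, rfl⟩ := exists_adj_of_mem hφ he
    rcases Sym2.mem_iff.mp hx with rfl | rfl
    exacts [⟨a, rfl⟩, ⟨b, rfl⟩]
  · rintro ⟨a, rfl⟩
    obtain ⟨b, hab⟩ := hdeg a
    exact ⟨_, mk_mem_of_adj hφ hab, Sym2.mem_mk_left _ _⟩

lemma IsCopy.card_vertsOf [Fintype α] [DecidableEq V] (hE : IsCopy F E)
    (hdeg : ∀ a, ∃ b, F.Adj a b) : #(vertsOf E) = Fintype.card α := by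
  obtain ⟨φ, hφ⟩ := hE
  rw [vertsOf_eq_map hφ hdeg, card_map, card_univ]

lemma IsCopy.card_eq (hE : IsCopy F E) : #E = F.edgeSet.ncard := by
  obtain ⟨φ, hφ⟩ := hE
  rw [← Set.ncard_coe_finset, hφ, Set.ncard_image_of_injective _ (Sym2.map.injective φ.injective)]

end Copies

section Covers

variable {γ : Type*} {E₀ : Finset γ} {𝓕 𝒮 : Finset (Finset γ)}

lemma exists_subset_cover [DecidableEq γ] (hcover : ∀ e ∈ E₀, ∃ E ∈ 𝓕, e ∈ E) :
    ∃ 𝒮 ⊆ 𝓕, #𝒮 ≤ #E₀ ∧ (∀ e ∈ E₀, ∃ E ∈ 𝒮, e ∈ E) ∧ ∀ E ∈ 𝒮, ∃ e ∈ E₀, e ∈ E := by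
  choose! cover hcover𝓕 hmem using hcover
  refine ⟨E₀.image cover, ?_, card_image_le, fun e he => ⟨_, mem_image_of_mem _ he, hmem e he⟩,
    ?_⟩ <;> intro E hE <;> obtain ⟨e, he, rfl⟩ := mem_image.mp hE
  exacts [hcover𝓕 e he, ⟨e, he, hmem e he⟩]

lemma two_le_card_of_cover (h𝒮 : 𝒮 ⊆ 𝓕) (hnot : E₀ ∉ 𝓕) (hcard : ∀ E ∈ 𝓕, #E = #E₀)
    (hne : E₀.Nonempty) (hcov : ∀ e ∈ E₀, ∃ E ∈ 𝒮, e ∈ E) : 2 ≤ #𝒮 := by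
  by_contra! h
  obtain ⟨e, he⟩ := hne
  obtain ⟨E, hE, -⟩ := hcov e he
  have hsub : E₀ ⊆ E := fun e' he' => by
    obtain ⟨E', hE', he'E'⟩ := hcov e' he'
    rwa [card_le_one.mp (by omega) E' hE' E hE] at he'E'
  rw [eq_of_subset_of_card_le hsub (hcard E (h𝒮 hE)).le] at hnot
  exact hnot (h𝒮 hE)

end Covers

lemma pairwiseDisjoint_of_sum_card_le {ι β : Type*} [DecidableEq ι] [DecidableEq β]
    {s : Finset ι} {t : ι → Finset β} (h : ∑ i ∈ s, #(t i) ≤ #(s.biUnion t)) :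
    (s : Set ι).PairwiseDisjoint t := by
  intro i hi j hj hij
  refine disjoint_left.mpr fun x hxi hxj => ?_
  have hsplit : s.biUnion t = (s.erase j).biUnion t ∪ t j := by
    rw [union_comm, ← biUnion_insert, insert_erase (mem_coe.mp hj)]
  have hinter : 0 < #((s.erase j).biUnion t ∩ t j) :=
    card_pos.mpr ⟨x, mem_inter.mpr ⟨mem_biUnion.mpr ⟨i, mem_erase.mpr ⟨hij, hi⟩, hxi⟩, hxj⟩⟩
  have := card_union_add_card_inter ((s.erase j).biUnion t) (t j)
  have := card_biUnion_le (s := s.erase j) (t := t)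
  have := sum_erase_add s (fun i => #(t i)) (mem_coe.mp hj)
  rw [hsplit] at h
  omega

section Configurations

variable {α V : Type*} [DecidableEq V] {𝓕 𝒮 : Finset (Finset (Sym2 V))}

lemma NoAvoidableConfig.card_mul_le {r : ℕ} (hav : NoAvoidableConfig r 𝓕) (h𝒮 : 𝒮 ⊆ 𝓕)
    (hne : 𝒮.Nonempty) (hconn : ConfigConnected 𝒮) (hsmall : #𝒮 ≤ 2 * r.choose 2) :
    ((r : ℤ) - 1) * #𝒮 ≤ #(𝒮.sup vertsOf) := by
  by_contra! h
  exact hav ⟨𝒮, h𝒮, hne, hconn, hsmall, by linarith⟩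

lemma configConnected_of_cover {F : SimpleGraph α} {f : α → V} (hF : F.Connected)
    (hcov : ∀ a b, F.Adj a b → ∃ E ∈ 𝒮, f a ∈ vertsOf E ∧ f b ∈ vertsOf E)
    (hmeet : ∀ E ∈ 𝒮, ∃ a, f a ∈ vertsOf E) : ConfigConnected 𝒮 := by
  intro u hu v hv
  obtain ⟨E, hE, huE⟩ := mem_sup.mp hu
  obtain ⟨E', hE', hvE'⟩ := mem_sup.mp hv
  obtain ⟨a, ha⟩ := hmeet E hE
  obtain ⟨b, hb⟩ := hmeet E' hE'
  have hab := Relation.ReflTransGen.lift (p := fun x y => ∃ E ∈ 𝒮, x ∈ vertsOf E ∧ y ∈ vertsOf E)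
    f hcov _ _ ((reachable_iff_reflTransGen a b).mp (hF.preconnected a b))
  exact .head ⟨E, hE, huE, ha⟩ (hab.tail ⟨E', hE', hb, hvE'⟩)

end Configurations

section Traces

variable {ι α V : Type*} (ψ : α ↪ V) (H : ι → Finset V)

noncomputable def traceFamily (i : ι) : Finset α := (H i).preimage ψ ψ.injective.injOn

variable {ψ H}

@[simp] lemma mem_traceFamily {i : ι} {a : α} : a ∈ traceFamily ψ H i ↔ ψ a ∈ H i := mem_preimage

variable [DecidableEq V]

lemma card_traceFamily_add_card_sdiff [Fintype α] (i : ι) :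
    #(traceFamily ψ H i) + #(H i \ univ.map ψ) = #(H i) := by
  rw [← card_inter_add_card_sdiff (H i) (univ.map ψ), ← card_map ψ]
  congr 2
  ext x
  simp only [mem_map, mem_traceFamily, mem_inter, mem_univ, true_and]
  constructor
  · rintro ⟨a, ha, rfl⟩
    exact ⟨ha, a, rfl⟩
  · rintro ⟨hx, a, rfl⟩
    exact ⟨a, hx, rfl⟩

variable [Fintype ι] [Fintype α] [DecidableEq α]

lemma traceFamily_sharedVerts_eq_two_and_pairwise_disjoint [Nontrivial ι] {F : SimpleGraph α}
    (hF : TwoConnected F) (hH : ∀ i, #(H i) = Fintype.card α)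
    (hcov : ∀ a b, F.Adj a b → ∃ i, a ∈ traceFamily ψ H i ∧ b ∈ traceFamily ψ H i)
    (hedge : ∀ i, ∃ a b, F.Adj a b ∧ a ∈ traceFamily ψ H i ∧ b ∈ traceFamily ψ H i)
    (hnull : ((Fintype.card α : ℤ) - 1) * Fintype.card ι ≤ #(univ.sup H)) :
    (∀ i, #(traceFamily ψ H i ∩ sharedVerts (traceFamily ψ H)) = 2) ∧
    (∀ a ∈ sharedVerts (traceFamily ψ H), #{i | a ∈ traceFamily ψ H i} = 2) ∧
    Pairwise (Disjoint on fun i => H i \ univ.map ψ) := by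
  classical
  have hpos : ∀ a, ∃ i, a ∈ traceFamily ψ H i := fun a =>
    (hF.exists_adj a).elim fun b hab => (hcov a b hab).imp fun _ h => h.1
  have hshared := hF.two_le_card_inter_sharedVerts hcov hedge
  have hlow := card_add_card_le_sum_card hpos hshared
  have hsplit : univ.sup H ⊆ univ.map ψ ∪ univ.biUnion fun i => H i \ univ.map ψ := by
    intro x hx
    obtain ⟨i, -, hxi⟩ := mem_sup.mp hx
    by_cases hxW : x ∈ univ.map ψ
    · exact mem_union_left _ hxW
    · exact mem_union_right _ (mem_biUnion.mpr ⟨i, mem_univ i, mem_sdiff.mpr ⟨hxi, hxW⟩⟩)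
  have hU := (card_le_card hsplit).trans (card_union_le _ _)
  have hB := card_biUnion_le (s := univ) (t := fun i => H i \ univ.map ψ)
  have hsum := sum_add_distrib (s := univ) (f := fun i => #(traceFamily ψ H i))
    (g := fun i => #(H i \ univ.map ψ))
  simp only [card_traceFamily_add_card_sdiff, hH, sum_const, card_univ, smul_eq_mul,
    card_map] at hsum hU
  -- With `T = ∑ #(D i)` and `B = ∑ #(H i \ W)`: `T + B = m r` and
  -- `(r - 1) m ≤ #(⋃ H) ≤ r + #(⋃ (H i \ W)) ≤ r + B`, so `T ≤ r + m`; as also `r + m ≤ T`,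
  -- equality holds throughout.
  have hT : ∑ i, #(traceFamily ψ H i) ≤ Fintype.card α + Fintype.card ι := by
    zify at *; linarith
  have hB' : ∑ i, #(H i \ univ.map ψ) ≤ #(univ.biUnion fun i => H i \ univ.map ψ) := by
    zify at *; linarith
  refine ⟨(card_inter_sharedVerts_eq_two hpos hshared hT).1,
    (card_inter_sharedVerts_eq_two hpos hshared hT).2, fun i j hij => ?_⟩
  exact pairwiseDisjoint_of_sum_card_le hB' (mem_coe.mpr (mem_univ i)) (mem_coe.mpr (mem_univ j))
    hij

end Traces

lemma Finset.insert_insert_sdiff_pair {β : Type*} [DecidableEq β] {u v : β} {s : Finset β}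
    (hu : u ∈ s) (hv : v ∈ s) : insert u (insert v (s \ {u, v})) = s := by
  rw [insert_eq, insert_eq, ← union_assoc, ← insert_eq,
    union_sdiff_of_subset (insert_subset hu (singleton_subset_iff.mpr hv))]

lemma isCleanCycle_image {ι α V : Type*} [Fintype ι] [Fintype α] [DecidableEq α] [DecidableEq V]
    {ψ : α ↪ V} {H : ι → Finset V} {r m : ℕ} (hm : 2 ≤ m) (hH : ∀ i, #(H i) = r)
    (hdisj : Pairwise (Disjoint on fun i => H i \ univ.map ψ))
    {q : Fin m → ι} (hq : Injective q) {c : Fin m → α} (hc : Injective c)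
    (hqc : ∀ t, traceFamily ψ H (q t) ∩ sharedVerts (traceFamily ψ H) =
      {c t, c t.cycSucc}) :
    IsCleanCycle r m (univ.image fun t => H (q t)) := by
  set ext : Fin m → Finset V := fun t => H (q t) \ {ψ (c t), ψ (c t.cycSucc)}
  have hends : ∀ t, ψ (c t) ∈ H (q t) ∧ ψ (c t.cycSucc) ∈ H (q t) := fun t => by
    have h := (hqc t).ge
    simp only [insert_subset_iff, singleton_subset_iff, mem_inter, mem_traceFamily] at h
    exact ⟨h.1.1, h.2.1⟩
  have hshared : ∀ t a, a ∈ sharedVerts (traceFamily ψ H) → ψ a ∉ ext t := fun t a ha hat => by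
    have h : a ∈ traceFamily ψ H (q t) ∩ sharedVerts (traceFamily ψ H) :=
      mem_inter.mpr ⟨mem_traceFamily.mpr (mem_sdiff.mp hat).1, ha⟩
    rw [hqc t] at h
    rcases mem_insert.mp h with rfl | h
    · simp [ext] at hat
    · rw [mem_singleton.mp h] at hat; simp [ext] at hat
  refine ⟨fun t => ψ (c t), ext, ψ.injective.comp hc, fun t => ?_, fun t₁ t₂ ht => ?_,
    fun t₁ t₂ => ?_, ?_⟩
  · have hne : ψ (c t) ≠ ψ (c t.cycSucc) := fun h =>
      Fin.cycSucc_ne hm t (hc (ψ.injective h)).symm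
    rw [card_sdiff_of_subset (insert_subset (hends t).1 (singleton_subset_iff.mpr (hends t).2)),
      card_pair hne, hH]
  · refine disjoint_left.mpr fun x hx₁ hx₂ => ?_
    by_cases hxW : x ∈ univ.map ψ
    · obtain ⟨a, -, rfl⟩ := mem_map.mp hxW
      exact hshared t₁ a (mem_sharedVerts_of_ne (hq.ne ht)
        (mem_traceFamily.mpr (mem_sdiff.mp hx₁).1) (mem_traceFamily.mpr (mem_sdiff.mp hx₂).1)) hx₁
    · exact disjoint_left.mp (hdisj (hq.ne ht)) (mem_sdiff.mpr ⟨(mem_sdiff.mp hx₁).1, hxW⟩)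
        (mem_sdiff.mpr ⟨(mem_sdiff.mp hx₂).1, hxW⟩)
  · refine hshared t₂ (c t₁) ?_
    have h := (hqc t₁).ge
    simp only [insert_subset_iff, mem_inter] at h
    exact h.1.2
  · exact congrArg (image · univ)
      (funext fun t => (insert_insert_sdiff_pair (hends t).1 (hends t).2).symm)

theorem exists_isCleanCycle_of_cover {α V : Type*} [Fintype α] [DecidableEq α] [DecidableEq V]
    {F : SimpleGraph α} (hF : TwoConnected F) {ψ : α ↪ V} {E₀ : Finset (Sym2 V)}
    (hψ : (↑E₀ : Set (Sym2 V)) = Sym2.map ψ '' F.edgeSet) {𝓕 𝒮 : Finset (Finset (Sym2 V))}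
    (hcopies : ∀ E ∈ 𝓕, IsCopy F E) (hav : NoAvoidableConfig (Fintype.card α) 𝓕) (h𝒮 : 𝒮 ⊆ 𝓕)
    (hcov : ∀ e ∈ E₀, ∃ E ∈ 𝒮, e ∈ E) (hmeet : ∀ E ∈ 𝒮, ∃ e ∈ E₀, e ∈ E) (h2 : 2 ≤ #𝒮)
    (hsmall : #𝒮 ≤ 2 * (Fintype.card α).choose 2) :
    ∃ q : Fin (Fintype.card 𝒮) → 𝒮, Surjective q ∧
      IsCleanCycle (Fintype.card α) (Fintype.card 𝒮) (univ.image fun t => vertsOf (q t).1) := by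
  set H : 𝒮 → Finset V := fun E => vertsOf E.1
  have hadj : ∀ a b, F.Adj a b → ∃ E, a ∈ traceFamily ψ H E ∧ b ∈ traceFamily ψ H E := by
    intro a b hab
    obtain ⟨E, hE, he⟩ := hcov _ (mk_mem_of_adj hψ hab)
    exact ⟨⟨E, hE⟩, mem_traceFamily.mpr (mem_vertsOf.mpr ⟨_, he, Sym2.mem_mk_left _ _⟩),
      mem_traceFamily.mpr (mem_vertsOf.mpr ⟨_, he, Sym2.mem_mk_right _ _⟩)⟩
  have hedge : ∀ E, ∃ a b, F.Adj a b ∧ a ∈ traceFamily ψ H E ∧ b ∈ traceFamily ψ H E := by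
    rintro ⟨E, hE⟩
    obtain ⟨e, he₀, he⟩ := hmeet E hE
    obtain ⟨a, b, hab, rfl⟩ := exists_adj_of_mem hψ he₀
    exact ⟨a, b, hab, mem_traceFamily.mpr (mem_vertsOf.mpr ⟨_, he, Sym2.mem_mk_left _ _⟩),
      mem_traceFamily.mpr (mem_vertsOf.mpr ⟨_, he, Sym2.mem_mk_right _ _⟩)⟩
  have hne : ∀ E, (traceFamily ψ H E).Nonempty := fun E =>
    (hedge E).elim fun a ⟨_, _, ha, _⟩ => ⟨a, ha⟩
  have : Nontrivial 𝒮 := Fintype.one_lt_card_iff_nontrivial.mp (by rw [Fintype.card_coe]; omega)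
  have hconn : ConfigConnected 𝒮 := configConnected_of_cover hF.connected (f := ψ)
    (fun a b hab => (hadj a b hab).elim fun E h =>
      ⟨E.1, E.2, mem_traceFamily.mp h.1, mem_traceFamily.mp h.2⟩)
    (fun E hE => (hne ⟨E, hE⟩).elim fun a ha => ⟨a, mem_traceFamily.mp ha⟩)
  have hcard : ∀ E : 𝒮, #(H E) = Fintype.card α := fun E =>
    (hcopies E.1 (h𝒮 E.2)).card_vertsOf hF.exists_adj
  have hnull := hav.card_mul_le h𝒮 (card_pos.mp (by omega)) hconn hsmall
  have hsup : univ.sup H = 𝒮.sup vertsOf := by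
    rw [univ_eq_attach]
    exact sup_attach 𝒮 vertsOf
  rw [← hsup, ← Fintype.card_coe] at hnull
  obtain ⟨hpart, hdeg, hdisj⟩ :=
    traceFamily_sharedVerts_eq_two_and_pairwise_disjoint (ψ := ψ) (H := H) hF hcard hadj hedge
      hnull
  obtain ⟨q, c, hq, hc, hqc⟩ := exists_cyclic_order hpart hdeg
    (reachable_incidenceGraph_sharedVerts hF.connected hadj hne)
  exact ⟨q, hq.2, isCleanCycle_image (ψ := ψ) (H := H) (by rw [Fintype.card_coe]; omega) hcard
    hdisj hq.1 hc hqc⟩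

/-- Lemma 5.3, main case: let `F` be 2-connected with `r` vertices and `s`
edges, and `𝓕` an `F`-graph whose underlying multi-hypergraph contains no avoidable
configuration.  If `E₀` is a copy of `F` contained in the union graph of `𝓕` but not an
`F`-edge of `𝓕`, then the multi-hypergraph contains a clean `k`-cycle, `2 ≤ k ≤ s`, with
every edge of `E₀` inside some hyperedge of the cycle. -/
theorem stmt_14 {α V : Type*} [Fintype α] [DecidableEq V]
    (F : SimpleGraph α) (hF : TwoConnected F) (r s : ℕ)
    (hr : Fintype.card α = r) (hs : F.edgeSet.ncard = s)
    (𝓕 : Finset (Finset (Sym2 V))) (hcopies : ∀ E ∈ 𝓕, IsCopy F E)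
    (hav : NoAvoidableConfig r 𝓕)
    (E₀ : Finset (Sym2 V)) (hE₀ : IsCopy F E₀) (hnot : E₀ ∉ 𝓕)
    (hcover : ∀ e ∈ E₀, ∃ E ∈ 𝓕, e ∈ E) :
    ∃ k, 2 ≤ k ∧ k ≤ s ∧ ∃ C : Finset (Finset V), IsCleanCycle r k C ∧
      (∀ h ∈ C, ∃ E ∈ 𝓕, vertsOf E = h) ∧
      (∀ e ∈ E₀, ∃ h ∈ C, ∀ x, x ∈ e → x ∈ h) := by
  classical
  subst hr hs
  have ⟨ψ, hψ⟩ := hE₀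
  obtain ⟨𝒮, h𝒮, h𝒮E₀, hcov, hmeet⟩ := exists_subset_cover hcover
  have hE₀ne : E₀.Nonempty := by
    have : Nonempty α := Fintype.card_pos_iff.mp (by have := hF.1; omega)
    obtain ⟨b, hab⟩ := hF.exists_adj (Classical.arbitrary α)
    exact ⟨_, mk_mem_of_adj hψ hab⟩
  have h2 := two_le_card_of_cover h𝒮 hnot
    (fun E hE => (hcopies E hE).card_eq.trans hE₀.card_eq.symm) hE₀ne hcov
  have hs𝒮 : #𝒮 ≤ F.edgeSet.ncard := h𝒮E₀.trans hE₀.card_eq.le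
  obtain ⟨q, hq, hclean⟩ := exists_isCleanCycle_of_cover hF hψ hcopies hav h𝒮 hcov hmeet h2
    (hs𝒮.trans (F.ncard_edgeSet_le_choose_two.trans (Nat.le_mul_of_pos_left _ two_pos)))
  refine ⟨Fintype.card 𝒮, by simpa using h2, by simpa using hs𝒮, _, hclean, ?_, ?_⟩
  · simp only [mem_image, mem_univ, true_and, forall_exists_index, forall_apply_eq_imp_iff]
    exact fun t => ⟨_, h𝒮 (q t).2, rfl⟩
  · intro e he
    obtain ⟨E, hE, heE⟩ := hcov e he
    obtain ⟨t, ht⟩ := hq ⟨E, hE⟩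
    exact ⟨_, mem_image_of_mem _ (mem_univ t), fun x hx => mem_vertsOf.mpr ⟨e, ht ▸ heE, hx⟩⟩
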